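/- Let Γ be a group and c a cocycle for the left regular representation. Then δ_c satisfies the Leibniz (derivation) rule: for all g₁, g₂ ∈ Γ and all (a,b) ∈ Γ×Γ, δ_c(g₁g₂)(a,b) = δ_c(g₂)(g₁⁻¹·a, b) + δ_c(g₁)(a, b·g₂⁻¹). (This is the paper's verification, in its section on group cocycles, that δ_c(γ₁γ₂) = γ₁·δ_c(γ₂) + δ_c(γ₁)·γ₂ for the ℓ²(Γ×Γ)-bimodule structure in which the left action acts on the first leg and the right action on the second leg.) -/
import Mathlib

/-- The derivation associated to a cocycle `c : Γ → ℓ²(Γ)`: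
`δ_c(g)(a,b) = c(g)(a) · [a·b = g]`, as a function on `Γ × Γ`. -/
noncomputable def deltaFun {Γ : Type*} [Group Γ] [DecidableEq Γ]
    (c : Γ → lp (fun _ : Γ => ℂ) 2) (g : Γ) : Γ × Γ → ℂ :=
  fun p => c g p.1 * (if p.1 * p.2 = g then 1 else 0)

/-- Leibniz rule for the derivation associated to a cocycle for the left regular
representation: `δ_c(g₁g₂)(a,b) = δ_c(g₂)(g₁⁻¹·a, b) + δ_c(g₁)(a, b·g₂⁻¹)`,
i.e. `δ_c(γ₁γ₂) = γ₁·δ_c(γ₂) + δ_c(γ₁)·γ₂` for the `ℓ²(Γ×Γ)`-bimodule structure in which the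
left action acts on the first leg and the right action on the second leg. -/
theorem deltaFun_leibniz {Γ : Type*} [Group Γ] [DecidableEq Γ]
    (c : Γ → lp (fun _ : Γ => ℂ) 2)
    (hc : ∀ g h : Γ, ∀ x : Γ, c (g * h) x = c h (g⁻¹ * x) + c g x)
    (g₁ g₂ a b : Γ) :
    deltaFun c (g₁ * g₂) (a, b) =
      deltaFun c g₂ (g₁⁻¹ * a, b) + deltaFun c g₁ (a, b * g₂⁻¹) := by
  simp only [deltaFun]
  by_cases h : a * b = g₁ * g₂
  · have h2 : g₁⁻¹ * a * b = g₂ := by rw [mul_assoc, h]; group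
    have h3 : a * (b * g₂⁻¹) = g₁ := by rw [← mul_assoc, h]; group
    rw [if_pos h, if_pos h2, if_pos h3, hc g₁ g₂ a]
    ring
  · have h2 : ¬ (g₁⁻¹ * a * b = g₂) := fun hx => h (by rw [← hx]; group)
    have h3 : ¬ (a * (b * g₂⁻¹) = g₁) := fun hx => h (by rw [← hx]; group)
    rw [if_neg h, if_neg h2, if_neg h3]; ring
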